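/- arXiv:2008.07447 — 3 statements merged into one kernel-verified Lean document; each statement's English description precedes it below -/
import Mathlib

section
/- For f = x²y² in ℂ[x,y], the exterior square ⋀²Ω¹(log f) equals (1/(x³y³))Ω², which strictly contains Ω²(log f) = (1/(x²y²))Ω². Hence for a non-reduced divisor the logarithmic differential forms need not be closed under exterior product. -/
/-!
A meromorphic 2-form is identified with its coefficient in `Frac ℂ[x,y]` relative to `dx ∧ dy`.
A logarithmic 1-form along `x²y²` is `(a dx + b dy)/(x²y²)` with `y ∣ a` and `x ∣ b`, so the
determinants `a₁b₂ - a₂b₁` of pairs of them are exactly the multiples of `xy`, and the wedges span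
`xy/(x²y²)² = 1/(x³y³)`. This strictly contains the span of `1/(x²y²)` because `xy` is not a unit.
-/

open MvPolynomial

noncomputable def Rpoly : Type := MvPolynomial (Fin 2) ℂ

noncomputable instance : CommRing Rpoly := inferInstanceAs (CommRing (MvPolynomial (Fin 2) ℂ))
noncomputable instance : IsDomain Rpoly := inferInstanceAs (IsDomain (MvPolynomial (Fin 2) ℂ))

section Wedge

variable {R : Type*} [CommRing R]

theorem exists_det_eq_iff_mul_dvd (x y d : R) :
    (∃ a₁ b₁ a₂ b₂ : R, (x ∣ b₁ ∧ y ∣ a₁) ∧ (x ∣ b₂ ∧ y ∣ a₂) ∧ d = a₁ * b₂ - a₂ * b₁) ↔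
      x * y ∣ d := by
  constructor
  · rintro ⟨a₁, b₁, a₂, b₂, ⟨⟨b₁', rfl⟩, ⟨a₁', rfl⟩⟩, ⟨⟨b₂', rfl⟩, ⟨a₂', rfl⟩⟩, rfl⟩
    exact ⟨a₁' * b₂' - a₂' * b₁', by ring⟩
  · rintro ⟨c, rfl⟩
    exact ⟨y * c, 0, 0, x, ⟨dvd_zero x, dvd_mul_right y c⟩, ⟨dvd_refl x, dvd_zero y⟩, by ring⟩

variable {K : Type*} [Field K] [Algebra R K]

theorem span_setOf_det_div_eq (x y : R) (g : K) :
    Submodule.span R {w : K | ∃ a₁ b₁ a₂ b₂ : R, (x ∣ b₁ ∧ y ∣ a₁) ∧ (x ∣ b₂ ∧ y ∣ a₂) ∧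
        w = algebraMap R K (a₁ * b₂ - a₂ * b₁) / g} =
      Submodule.span R {algebraMap R K (x * y) / g} := by
  refine (congrArg (Submodule.span R) (Set.ext fun w => ?_)).trans (Submodule.span_eq _)
  simp only [Set.mem_ofPred_eq, SetLike.mem_coe, Submodule.mem_span_singleton, Algebra.smul_def,
    ← mul_div_assoc, ← map_mul]
  constructor
  · rintro ⟨a₁, b₁, a₂, b₂, hx₁, hx₂, rfl⟩
    obtain ⟨c, hc⟩ := (exists_det_eq_iff_mul_dvd x y _).mp ⟨a₁, b₁, a₂, b₂, hx₁, hx₂, rfl⟩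
    exact ⟨c, by rw [hc, mul_comm]⟩
  · rintro ⟨c, rfl⟩
    obtain ⟨a₁, b₁, a₂, b₂, hx₁, hx₂, hd⟩ :=
      (exists_det_eq_iff_mul_dvd x y (c * (x * y))).mpr (dvd_mul_left _ _)
    exact ⟨a₁, b₁, a₂, b₂, hx₁, hx₂, by rw [hd]⟩

theorem span_singleton_inv_le_span_singleton_inv_iff [FaithfulSMul R K] {a b : R}
    (ha : a ≠ 0) (hb : b ≠ 0) :
    Submodule.span R {(algebraMap R K a)⁻¹} ≤ Submodule.span R {(algebraMap R K b)⁻¹} ↔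
      a ∣ b := by
  have ha' : algebraMap R K a ≠ 0 := (FaithfulSMul.algebraMap_eq_zero_iff R K).not.mpr ha
  have hb' : algebraMap R K b ≠ 0 := (FaithfulSMul.algebraMap_eq_zero_iff R K).not.mpr hb
  rw [Submodule.span_singleton_le_iff_mem, Submodule.mem_span_singleton]
  refine exists_congr fun c => ?_
  rw [Algebra.smul_def, ← div_eq_mul_inv, inv_eq_one_div, div_eq_div_iff hb' ha', one_mul,
    ← map_mul, (FaithfulSMul.algebraMap_injective R K).eq_iff, mul_comm, eq_comm]

theorem algebraMap_mul_div_sq_mul_sq_sq [FaithfulSMul R K] {x y : R} (hx : x ≠ 0) (hy : y ≠ 0) :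
    algebraMap R K (x * y) / algebraMap R K (x ^ 2 * y ^ 2) ^ 2 =
      (algebraMap R K (x ^ 3 * y ^ 3))⁻¹ := by
  have hx' : algebraMap R K x ≠ 0 := (FaithfulSMul.algebraMap_eq_zero_iff R K).not.mpr hx
  have hy' : algebraMap R K y ≠ 0 := (FaithfulSMul.algebraMap_eq_zero_iff R K).not.mpr hy
  simp only [map_mul, map_pow]
  field_simp

end Wedge

theorem X_mul_X_not_dvd_one {R σ : Type*} [CommRing R] [IsDomain R]
    (i j : σ) : ¬ (X i * X j : MvPolynomial σ R) ∣ 1 :=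
  fun h => (X_prime (i := i)).not_isUnit (isUnit_of_dvd_one (dvd_of_mul_right_dvd h))

theorem wedge_of_log_one_forms_x_sq_y_sq :
    (Submodule.span Rpoly
        {w : FractionRing Rpoly | ∃ a₁ b₁ a₂ b₂ : Rpoly,
          ((X 0 : MvPolynomial (Fin 2) ℂ) ∣ b₁ ∧ (X 1 : MvPolynomial (Fin 2) ℂ) ∣ a₁) ∧
          ((X 0 : MvPolynomial (Fin 2) ℂ) ∣ b₂ ∧ (X 1 : MvPolynomial (Fin 2) ℂ) ∣ a₂) ∧
          w = algebraMap Rpoly (FractionRing Rpoly) (a₁ * b₂ - a₂ * b₁) /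
              (algebraMap Rpoly (FractionRing Rpoly)
                ((X 0 : MvPolynomial (Fin 2) ℂ) ^ 2 * X 1 ^ 2)) ^ 2} =
      Submodule.span Rpoly
        {(algebraMap Rpoly (FractionRing Rpoly)
            ((X 0 : MvPolynomial (Fin 2) ℂ) ^ 3 * X 1 ^ 3))⁻¹}) ∧
    Submodule.span Rpoly
        {(algebraMap Rpoly (FractionRing Rpoly)
            ((X 0 : MvPolynomial (Fin 2) ℂ) ^ 2 * X 1 ^ 2))⁻¹} <
      Submodule.span Rpoly
        {(algebraMap Rpoly (FractionRing Rpoly)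
            ((X 0 : MvPolynomial (Fin 2) ℂ) ^ 3 * X 1 ^ 3))⁻¹} := by
  have hne : ∀ m : ℕ, ((X 0 : MvPolynomial (Fin 2) ℂ) ^ m * X 1 ^ m) ≠ 0 := fun m =>
    mul_ne_zero (pow_ne_zero m (X_ne_zero 0)) (pow_ne_zero m (X_ne_zero 1))
  have hle_iff {a b : Rpoly} (ha : a ≠ 0) (hb : b ≠ 0) :=
    span_singleton_inv_le_span_singleton_inv_iff (K := FractionRing Rpoly) ha hb
  have hwedge := algebraMap_mul_div_sq_mul_sq_sq (R := Rpoly) (K := FractionRing Rpoly)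
    (X_ne_zero (R := ℂ) (0 : Fin 2)) (X_ne_zero (R := ℂ) (1 : Fin 2))
  refine ⟨?_, lt_of_le_not_ge ?_ fun h => ?_⟩
  · exact (span_setOf_det_div_eq (R := Rpoly) (X 0) (X 1) _).trans
      (congrArg (fun v => Submodule.span Rpoly {v}) hwedge)
  · exact (hle_iff (hne 2) (hne 3)).mpr
      (mul_dvd_mul (pow_dvd_pow _ (by norm_num)) (pow_dvd_pow _ (by norm_num)))
  · have hdvd : (X 0 ^ 3 * X 1 ^ 3 : MvPolynomial (Fin 2) ℂ) ∣ X 0 ^ 2 * X 1 ^ 2 :=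
      (hle_iff (hne 3) (hne 2)).mp h
    refine X_mul_X_not_dvd_one (0 : Fin 2) 1 ((mul_dvd_mul_iff_left (hne 2)).mp ?_)
    convert hdvd using 1 <;> ring
end

section
/- Let D be an effective divisor on a smooth complex manifold X with reduction D_red. Then there is a natural isomorphism (equality inside meromorphic forms) Ω^k_X(log D) = Ω^k_X(log D_red) ⊗ 𝒪_X(D − D_red). In particular Ω^k_X(log D) ≅ Ω^k_X(log D_red) as 𝒪_X-modules. -/
/-!
Write `f = ∏ zⱼ^nⱼ`, `f_red = ∏ zⱼ` and `G = ∏ zⱼ^(nⱼ-1)`, so that `f = G·f_red`. By the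
Leibniz rule `df = G · ∑ⱼ nⱼ (∏_{k≠j} z_k) dzⱼ`, and since the exterior algebra is a free, hence
torsion-free, module, `f ∣ df ∧ ω` iff `f_red ∣ ∑ⱼ nⱼ (∏_{k≠j} z_k) (dzⱼ ∧ ω)`. Reading this
coordinatewise in a basis, the `j`-th summand is the only one not divisible by the prime `zⱼ`,
and `nⱼ` is a unit, so the condition is `zⱼ ∣ dzⱼ ∧ ω` for every `j`: it does not depend on the
multiplicities `nⱼ`.
-/

open MvPolynomial Finset

instance ExteriorAlgebra.instModuleFree {R M : Type*} [CommRing R] [AddCommGroup M] [Module R M]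
    [Module.Free R M] : Module.Free R (ExteriorAlgebra R M) :=
  Module.Free.of_equiv (DirectSum.decomposeLinearEquiv fun i : ℕ => ⋀[R]^i M).symm

theorem prod_dvd_sum_mul_prod_erase_iff {R ι : Type*} [CommRing R] [IsDomain R] [Fintype ι]
    [DecidableEq ι] {z c : ι → R} (hz : ∀ j, Prime (z j))
    (hcop : Pairwise fun i j => ¬ Associated (z i) (z j)) (hc : ∀ j, ¬ z j ∣ c j) (a : ι → R) :
    (∏ j, z j) ∣ ∑ j, c j * (∏ k ∈ univ.erase j, z k) * a j ↔ ∀ j, z j ∣ a j := by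
  refine ⟨fun h j => ?_, fun h => dvd_sum fun j _ => ?_⟩
  · have hsum : z j ∣ ∑ i, c i * (∏ k ∈ univ.erase i, z k) * a i :=
      (dvd_prod_of_mem z (mem_univ j)).trans h
    have hrest : z j ∣ ∑ i ∈ univ.erase j, c i * (∏ k ∈ univ.erase i, z k) * a i :=
      dvd_sum fun i hi => ((dvd_prod_of_mem z (mem_erase.mpr
        ⟨fun e => (mem_erase.mp hi).1 e.symm, mem_univ j⟩)).mul_left _).mul_right _
    have hzj_not_dvd : ¬ z j ∣ ∏ k ∈ univ.erase j, z k := by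
      rw [(hz j).dvd_finsetProd_iff]
      rintro ⟨k, hk, hdvd⟩
      exact hcop (mem_erase.mp hk).1.symm ((hz j).associated_of_dvd (hz k) hdvd)
    rw [← add_sum_erase _ _ (mem_univ j), dvd_add_left hrest] at hsum
    rcases (hz j).dvd_or_dvd hsum with h' | h'
    · rcases (hz j).dvd_or_dvd h' with h'' | h''
      exacts [absurd h'' (hc j), absurd h'' hzj_not_dvd]
    · exact h'
  · rw [← prod_erase_mul _ _ (mem_univ j)]
    exact mul_dvd_mul (dvd_mul_left _ _) (h j)

section FreeModule

variable {R M ι : Type*} [CommRing R] [AddCommGroup M] [Module R M]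

theorem Module.Basis.exists_eq_smul_iff_forall_dvd_repr (b : Module.Basis ι R M) (f : R)
    (x : M) :
    (∃ τ, x = f • τ) ↔ ∀ i, f ∣ b.repr x i := by
  refine ⟨fun ⟨τ, hτ⟩ i => ⟨b.repr τ i, by simp [hτ]⟩, fun h => ?_⟩
  choose q hq using h
  refine ⟨∑ i ∈ (b.repr x).support, q i • b i, ?_⟩
  conv_lhs => rw [← b.linearCombination_repr x, Finsupp.linearCombination_apply, Finsupp.sum]
  simp only [smul_sum, smul_smul, ← hq]

theorem exists_smul_eq_mul_smul_iff [IsDomain R] [Module.IsTorsionFree R M] {g : R} (hg : g ≠ 0)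
    (f : R) (x : M) : (∃ τ, g • x = (g * f) • τ) ↔ ∃ τ, x = f • τ := by
  simp only [mul_smul, smul_right_inj hg]

theorem exists_sum_smul_eq_prod_smul_iff [IsDomain R] [Module.Free R M] [Fintype ι]
    [DecidableEq ι] {z c : ι → R} (hz : ∀ j, Prime (z j))
    (hcop : Pairwise fun i j => ¬ Associated (z i) (z j)) (hc : ∀ j, ¬ z j ∣ c j) (A : ι → M) :
    (∃ τ, ∑ j, (c j * ∏ k ∈ univ.erase j, z k) • A j = (∏ j, z j) • τ) ↔
      ∀ j, ∃ τ, A j = z j • τ := by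
  let b := Module.Free.chooseBasis R M
  simp only [b.exists_eq_smul_iff_forall_dvd_repr, map_sum, map_smul, Finsupp.coe_finsetSum,
    Finset.sum_apply, Finsupp.smul_apply, smul_eq_mul, prod_dvd_sum_mul_prod_erase_iff hz hcop hc]
  exact forall_comm

end FreeModule

section Derivation

variable {S A M ι : Type*} [CommRing S] [CommRing A] [Algebra S A] [AddCommGroup M] [Module A M]
  [Module S M] [DecidableEq ι] (D : Derivation S A M)

theorem Derivation.leibniz_finsetProd (s : Finset ι) (g : ι → A) :
    D (∏ j ∈ s, g j) = ∑ j ∈ s, (∏ k ∈ s.erase j, g k) • D (g j) := by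
  induction s using Finset.induction_on with
  | empty => simp
  | insert a s ha ih =>
    rw [prod_insert ha, D.leibniz, ih, sum_insert ha, erase_insert ha, smul_sum, add_comm]
    congr 1
    refine sum_congr rfl fun j hj => ?_
    rw [erase_insert_of_ne (by rintro rfl; exact ha hj),
      prod_insert fun h => ha (mem_of_mem_erase h), mul_smul]

theorem Derivation.leibniz_prod_pow [IsScalarTower S A M] [Fintype ι] (z : ι → A) {n : ι → ℕ}
    (hn : ∀ j, 1 ≤ n j) :
    D (∏ j, z j ^ n j) =
      (∏ j, z j ^ (n j - 1)) • ∑ j, ((n j : A) * ∏ k ∈ univ.erase j, z k) • D (z j) := by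
  rw [D.leibniz_finsetProd, smul_sum]
  refine sum_congr rfl fun j _ => ?_
  have hsplit : ∏ k ∈ univ.erase j, z k ^ n k =
      (∏ k ∈ univ.erase j, z k ^ (n k - 1)) * ∏ k ∈ univ.erase j, z k := by
    rw [← prod_mul_distrib]
    exact prod_congr rfl fun k _ => by rw [← pow_succ, Nat.sub_add_cancel (hn k)]
  rw [D.leibniz_pow, ← Nat.cast_smul_eq_nsmul A, smul_smul, smul_smul, smul_smul, hsplit,
    ← prod_erase_mul _ (fun k => z k ^ (n k - 1)) (mem_univ j)]
  ring_nf

end Derivation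

theorem exists_map_derivation_prod_pow_eq_smul_iff {S R V N ι : Type*} [CommRing S] [CommRing R]
    [IsDomain R] [Algebra S R] [AddCommGroup V] [Module R V] [Module S V] [IsScalarTower S R V]
    [AddCommGroup N] [Module R N] [Module.Free R N] [Fintype ι] [DecidableEq ι]
    (d : Derivation S R V) (L : V →ₗ[R] N) {z : ι → R} (hz : ∀ j, Prime (z j))
    (hcop : Pairwise fun i j => ¬ Associated (z i) (z j)) {n : ι → ℕ} (hn : ∀ j, 1 ≤ n j)
    (hnz : ∀ j, ¬ z j ∣ (n j : R)) :
    (∃ τ, L (d (∏ j, z j ^ n j)) = (∏ j, z j ^ n j) • τ) ↔ ∀ j, ∃ τ, L (d (z j)) = z j • τ := by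
  have hG : ∏ j, z j ^ (n j - 1) ≠ 0 :=
    prod_ne_zero_iff.mpr fun j _ => pow_ne_zero _ (hz j).ne_zero
  have hf : ∏ j, z j ^ n j = (∏ j, z j ^ (n j - 1)) * ∏ j, z j := by
    rw [← prod_mul_distrib]
    exact prod_congr rfl fun j _ => by rw [← pow_succ, Nat.sub_add_cancel (hn j)]
  rw [d.leibniz_prod_pow z hn, map_smul, hf, exists_smul_eq_mul_smul_iff hG, map_sum]
  simp only [map_smul]
  exact exists_sum_smul_eq_prod_smul_iff hz hcop hnz _

noncomputable def MvPolynomial.gradient (σ K : Type*) [CommRing K] :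
    Derivation K (MvPolynomial σ K) (σ → MvPolynomial σ K) where
  toLinearMap := LinearMap.pi fun i => (pderiv i).toLinearMap
  map_one_eq_zero' := by ext; simp
  leibniz' a b := by ext i; simp [Derivation.leibniz]

@[simp]
theorem MvPolynomial.gradient_apply {σ K : Type*} [CommRing K] (f : MvPolynomial σ K) :
    gradient σ K f = fun i => pderiv i f :=
  rfl

theorem log_forms_nonreduced_eq_reduced_twist
    (m t : ℕ) (z : Fin t → MvPolynomial (Fin m) ℂ)
    (hirr : ∀ i, Irreducible (z i))
    (hcop : ∀ i j, i ≠ j → ¬ Associated (z i) (z j))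
    (n : Fin t → ℕ) (hn : ∀ i, 1 ≤ n i)
    (ω : ExteriorAlgebra (MvPolynomial (Fin m) ℂ) (Fin m → MvPolynomial (Fin m) ℂ)) :
    (∃ τ, (ExteriorAlgebra.ι (MvPolynomial (Fin m) ℂ)
          (fun i => pderiv i (∏ j, z j ^ n j))) * ω = (∏ j, z j ^ n j) • τ) ↔
      (∃ τ, (ExteriorAlgebra.ι (MvPolynomial (Fin m) ℂ)
          (fun i => pderiv i (∏ j, z j))) * ω = (∏ j, z j) • τ) := by
  have hz : ∀ j, Prime (z j) := fun j => (hirr j).prime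
  have key (n : Fin t → ℕ) := exists_map_derivation_prod_pow_eq_smul_iff (n := n)
    (gradient (Fin m) ℂ) (LinearMap.mulRight _ ω ∘ₗ ExteriorAlgebra.ι _) hz hcop
  have hunit : ∀ j, IsUnit (n j : MvPolynomial (Fin m) ℂ) := fun j => by
    rw [← map_natCast C]
    exact (isUnit_iff_ne_zero.mpr (Nat.cast_ne_zero.mpr (Nat.one_le_iff_ne_zero.mp (hn j)))).map C
  refine (key n hn fun j h => (hz j).not_isUnit (isUnit_of_dvd_unit h (hunit j))).trans ?_
  simpa using
    (key (fun _ => 1) (fun _ => le_rfl) fun j => by simpa using (hz j).not_dvd_one).symm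
end

section
/- Let D be an effective divisor with reduction D_red. Then Ω⁰_X(log D) = 𝒪_X(D − D_red); i.e. a meromorphic function g with poles bounded by D satisfies dg having poles bounded by D if and only if g has poles bounded by D − D_red. -/
/-!
Write `f = z ^ n * g` with `z ∤ g`. For any derivation `D`,
`D (z ^ n * g) = z ^ (n - 1) * (z * D g + n * g * D z)`, so `f ∣ a * D f` forces
`z ∣ a * n * g * D z`. Taking `D = ∂ᵢ` for a variable `xᵢ` occurring in `z`, the derivative `∂ᵢ z`
is nonzero of smaller `xᵢ`-degree, hence not divisible by `z`, and `n` is a unit; so `z ∣ a`.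
Conversely `z ^ n ∣ z * D (z ^ n)`, and the Leibniz rule turns these local statements into
`f ∣ f_red * D f`.
-/

open MvPolynomial

namespace Derivation

variable {A R : Type*} [CommSemiring A] [CommSemiring R] [Algebra A R] (D : Derivation A R R)

theorem pow_dvd_mul_apply_pow (x : R) (n : ℕ) : x ^ n ∣ x * D (x ^ n) := by
  cases n with
  | zero => simp
  | succ k =>
    refine ⟨(k + 1 : ℕ) * D x, ?_⟩
    rw [D.leibniz_pow, nsmul_eq_mul, smul_eq_mul, Nat.add_sub_cancel]
    ring

theorem prod_dvd_prod_mul_apply_prod {ι : Type*} (s : Finset ι) {x y : ι → R}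
    (h : ∀ j ∈ s, x j ∣ y j * D (x j)) :
    (∏ j ∈ s, x j) ∣ (∏ j ∈ s, y j) * D (∏ j ∈ s, x j) := by
  classical
  induction s using Finset.induction_on with
  | empty => simp
  | insert k s hk ih =>
    rw [Finset.forall_mem_insert] at h
    obtain ⟨u, hu⟩ := h.1
    obtain ⟨v, hv⟩ := ih h.2
    simp only [Finset.prod_insert hk, D.leibniz, smul_eq_mul]
    refine ⟨y k * v + (∏ j ∈ s, y j) * u, ?_⟩
    calc (y k * ∏ j ∈ s, y j) * (x k * D (∏ j ∈ s, x j) + (∏ j ∈ s, x j) * D (x k))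
        = x k * y k * ((∏ j ∈ s, y j) * D (∏ j ∈ s, x j))
          + (∏ j ∈ s, x j) * (∏ j ∈ s, y j) * (y k * D (x k)) := by ring
      _ = _ := by rw [hu, hv]; ring

end Derivation

theorem Prime.dvd_of_pow_dvd_mul_apply_pow_mul {A R : Type*} [CommSemiring A] [CommRing R]
    [IsDomain R] [Algebra A R] (D : Derivation A R R) {p g a : R} {n : ℕ} (hp : Prime p)
    (hn : IsUnit (n : R)) (hpD : ¬ p ∣ D p) (hpg : ¬ p ∣ g) (h : p ^ n ∣ a * D (p ^ n * g)) :
    p ∣ a := by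
  obtain ⟨k, rfl⟩ : ∃ k, n = k + 1 :=
    Nat.exists_eq_add_one.mpr (Nat.pos_of_ne_zero (by rintro rfl; simp at hn))
  have hsplit : a * D (p ^ (k + 1) * g) =
      p ^ (k + 1) * (a * D g) + p ^ k * (a * g * (k + 1 : ℕ) * D p) := by
    rw [D.leibniz, D.leibniz_pow, smul_eq_mul, smul_eq_mul, nsmul_eq_mul]
    simp only [add_tsub_cancel_right]
    ring
  rw [hsplit, dvd_add_right (dvd_mul_right _ _), pow_succ,
    mul_dvd_mul_iff_left (pow_ne_zero _ hp.ne_zero)] at h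
  have hpn : ¬ p ∣ ((k + 1 : ℕ) : R) := fun hd => hp.not_isUnit (isUnit_of_dvd_unit hd hn)
  simpa only [hp.dvd_mul, hpg, hpn, hpD, or_false] using h

namespace MvPolynomial

variable {σ R : Type*}

theorem degreeOf_pderiv_lt [CommSemiring R] {i : σ} {p : MvPolynomial σ R}
    (hp : degreeOf i p ≠ 0) : degreeOf i (pderiv i p) < degreeOf i p := by
  rw [degreeOf_lt_iff (Nat.pos_of_ne_zero hp)]
  intro s hs
  rw [mem_support_iff, coeff_pderiv] at hs
  simpa using monomial_le_degreeOf i (mem_support_iff.mpr (left_ne_zero_of_mul hs))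

theorem pderiv_ne_zero_of_mem_vars [CommRing R] [IsDomain R] [CharZero R] {i : σ}
    {p : MvPolynomial σ R} (hi : i ∈ p.vars) : pderiv i p ≠ 0 := by
  obtain ⟨s, hs, hsi⟩ := (mem_vars_iff_mem_support i).mp hi
  have hle : Finsupp.single i 1 ≤ s := by
    rwa [Finsupp.single_le_iff, Nat.one_le_iff_ne_zero, ← Finsupp.mem_support_iff]
  intro h
  have hcoeff := coeff_pderiv (i := i) p (s - Finsupp.single i 1)
  rw [h, coeff_zero, tsub_add_cancel_of_le hle, eq_comm, mul_eq_zero] at hcoeff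
  rcases hcoeff with hc | hc
  · exact mem_support_iff.mp hs hc
  · exact Nat.cast_add_one_ne_zero _ hc

theorem not_dvd_pderiv_of_mem_vars [CommRing R] [IsDomain R] [CharZero R] {i : σ}
    {p : MvPolynomial σ R} (hi : i ∈ p.vars) : ¬ p ∣ pderiv i p := by
  rintro ⟨q, hq⟩
  have hpq : p * q ≠ 0 := hq ▸ pderiv_ne_zero_of_mem_vars hi
  have hlt := degreeOf_pderiv_lt (mem_vars_iff_degreeOf_ne_zero.mp hi)
  rw [hq, degreeOf_mul_eq (left_ne_zero_of_mul hpq) (right_ne_zero_of_mul hpq)] at hlt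
  omega

theorem isUnit_natCast [Field R] [CharZero R] {n : ℕ} (hn : n ≠ 0) :
    IsUnit (n : MvPolynomial σ R) := by
  simpa using (Nat.cast_ne_zero.mpr hn : (n : R) ≠ 0).isUnit.map C

theorem _root_.Irreducible.vars_nonempty [Field R] {p : MvPolynomial σ R} (hp : Irreducible p) :
    p.vars.Nonempty := by
  rw [Finset.nonempty_iff_ne_empty, Ne, vars_eq_empty_iff_eq_C]
  intro hC
  rw [hC] at hp
  exact hp.not_isUnit ((Ne.isUnit fun h0 => hp.ne_zero (by rw [h0, C_0])).map C)

end MvPolynomial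

theorem zero_log_forms_eq_twist
    (m t : ℕ) (z : Fin t → MvPolynomial (Fin m) ℂ)
    (hirr : ∀ i, Irreducible (z i))
    (hcop : ∀ i j, i ≠ j → ¬ Associated (z i) (z j))
    (n : Fin t → ℕ) (hn : ∀ i, 1 ≤ n i)
    (a : MvPolynomial (Fin m) ℂ) :
    (∀ i : Fin m, (∏ j, z j ^ n j) ∣ a * pderiv i (∏ j, z j ^ n j)) ↔ (∏ j, z j) ∣ a := by
  have hrel : Pairwise fun i j => IsRelPrime (z i) (z j) := fun i j hij =>
    (hirr i).isRelPrime_iff_not_dvd.mpr fun hd =>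
      hcop i j hij ((hirr i).associated_of_dvd (hirr j) hd)
  constructor
  · intro h
    refine Fintype.prod_dvd_of_isRelPrime hrel fun k => ?_
    obtain ⟨i, hi⟩ := (hirr k).vars_nonempty
    have hcofactor : ¬ z k ∣ ∏ j ∈ Finset.univ.erase k, z j ^ n j := fun hd =>
      (hirr k).not_isUnit (IsRelPrime.prod_right (fun j hj =>
        (hrel (Finset.ne_of_mem_erase hj).symm).pow_right) dvd_rfl hd)
    have hk := h i
    rw [← Finset.mul_prod_erase _ _ (Finset.mem_univ k)] at hk
    -- Without `A` given, unifying the instances in the type of `pderiv i` times out.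
    exact (hirr k).prime.dvd_of_pow_dvd_mul_apply_pow_mul (A := ℂ) (pderiv i)
      (isUnit_natCast (Nat.one_le_iff_ne_zero.mp (hn k)))
      (not_dvd_pderiv_of_mem_vars hi) hcofactor (dvd_of_mul_right_dvd hk)
  · rintro ⟨b, rfl⟩ i
    rw [mul_right_comm]
    exact dvd_mul_of_dvd_left ((pderiv i).prod_dvd_prod_mul_apply_prod Finset.univ fun j _ =>
      (pderiv i).pow_dvd_mul_apply_pow (z j) (n j)) b
end
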